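/- For every x < 1, the derivative of the function Φ(x) := K((1-√(1-x))/(1+√(1-x))) / √(1+√(1-x)) is given by Φ'(x) = [1/(4√((1-x)(1+√(1-x))³))] · K((1-√(1-x))/(1+√(1-x))) + [1/√((1-x)(1+√(1-x))⁵)] · K'((1-√(1-x))/(1+√(1-x))). -/

import Mathlib

/-- The complete elliptic integral of the first kind,
`K(m) = ∫₀¹ dζ / √((1-ζ²)(1-mζ²))`, defined for `m < 1`. -/
noncomputable def ellipticK (m : ℝ) : ℝ :=
  ∫ ζ in (0:ℝ)..1, 1 / Real.sqrt ((1 - ζ ^ 2) * (1 - m * ζ ^ 2))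

/-- `Φ(x) = K((1-√(1-x))/(1+√(1-x))) / √(1+√(1-x))`, defined for `x < 1`. -/
noncomputable def Phi (x : ℝ) : ℝ :=
  ellipticK ((1 - Real.sqrt (1 - x)) / (1 + Real.sqrt (1 - x))) /
    Real.sqrt (1 + Real.sqrt (1 - x))

/-!
Write the integrand of `K` as `(1 - t²)^(-1/2) · (1 - m t²)^(-1/2)`. The first factor is
integrable on `[0, 1]`, and for `m` near `m₀ < 1` the `m`-derivative of the second factor is
bounded uniformly in `t ∈ [0, 1]`, since `1 - m t² ≥ min 1 (1 - m)`; so `K` may be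
differentiated under the integral sign. The formula for `Φ'` is then the chain and quotient
rules, simplified with `√((1 - x)(1 + s)^(2k+1)) = s (1 + s)^k √(1 + s)` for `s = √(1 - x)`.
-/

open MeasureTheory Real Set Filter Topology
open scoped Interval

lemma min_one_one_sub_le_one_sub_mul_sq {t : ℝ} (ht : t ^ 2 ≤ 1) (y : ℝ) :
    min 1 (1 - y) ≤ 1 - y * t ^ 2 := by
  rcases le_total y 0 with hy | hy
  · exact (min_le_left _ _).trans (by nlinarith [sq_nonneg t])
  · exact (min_le_right _ _).trans (by nlinarith)

lemma one_sub_mul_sq_pos {t y : ℝ} (ht : t ∈ Icc (0 : ℝ) 1) (hy : y < 1) :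
    0 < 1 - y * t ^ 2 :=
  (lt_min one_pos (sub_pos.2 hy)).trans_le
    (min_one_one_sub_le_one_sub_mul_sq (pow_le_one₀ ht.1 ht.2) y)

lemma continuousOn_one_sub_mul_sq_rpow {y : ℝ} (hy : y < 1) (s : ℝ) :
    ContinuousOn (fun t : ℝ => (1 - y * t ^ 2) ^ s) [[0, 1]] := by
  refine ContinuousOn.rpow_const (by fun_prop) fun t ht => Or.inl ?_
  rw [uIcc_of_le zero_le_one] at ht
  exact (one_sub_mul_sq_pos ht hy).ne'

lemma hasDerivAt_one_sub_mul_sq_rpow {t y : ℝ} (hy : 0 < 1 - y * t ^ 2) (s : ℝ) :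
    HasDerivAt (fun y => (1 - y * t ^ 2) ^ s) (-t ^ 2 * s * (1 - y * t ^ 2) ^ (s - 1)) y := by
  have h : HasDerivAt (fun y => 1 - y * t ^ 2) (-t ^ 2) y := by
    simpa using ((hasDerivAt_id y).mul_const (t ^ 2)).const_sub 1
  exact h.rpow_const (Or.inl hy.ne')

lemma abs_deriv_one_sub_mul_sq_rpow_le {c t y s : ℝ} (hc : 0 < c) (hcy : c ≤ 1 - y * t ^ 2)
    (ht : t ^ 2 ≤ 1) (hs : s ≤ 1) :
    |-t ^ 2 * s * (1 - y * t ^ 2) ^ (s - 1)| ≤ |s| * c ^ (s - 1) := by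
  rw [abs_mul, abs_mul, abs_neg, abs_of_nonneg (sq_nonneg t),
    abs_of_pos (rpow_pos_of_pos (hc.trans_le hcy) _)]
  calc t ^ 2 * |s| * (1 - y * t ^ 2) ^ (s - 1) ≤ 1 * |s| * c ^ (s - 1) :=
        mul_le_mul (mul_le_mul_of_nonneg_right ht (abs_nonneg s))
          (rpow_le_rpow_of_nonpos hc hcy (by linarith))
          (rpow_pos_of_pos (hc.trans_le hcy) _).le (by positivity)
    _ = |s| * c ^ (s - 1) := by ring

theorem hasDerivAt_integral_mul_one_sub_mul_sq_rpow {w : ℝ → ℝ}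
    (hw : IntervalIntegrable w volume 0 1) {s m : ℝ} (hs : s ≤ 1) (hm : m < 1) :
    HasDerivAt (fun y => ∫ t in 0..1, w t * (1 - y * t ^ 2) ^ s)
      (∫ t in 0..1, w t * (-t ^ 2 * s * (1 - m * t ^ 2) ^ (s - 1))) m := by
  set c := min 1 ((1 - m) / 2)
  have hc : 0 < c := lt_min one_pos (by linarith)
  have hbound : ∀ t ∈ Ι (0 : ℝ) 1, ∀ y ∈ Metric.ball m ((1 - m) / 2),
      t ^ 2 ≤ 1 ∧ c ≤ 1 - y * t ^ 2 := by
    intro t ht y hy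
    rw [uIoc_of_le zero_le_one] at ht
    have ht2 : t ^ 2 ≤ 1 := pow_le_one₀ ht.1.le ht.2
    have hy' : (1 - m) / 2 ≤ 1 - y := by linarith [(abs_sub_lt_iff.1 (Metric.mem_ball.1 hy)).1]
    exact ⟨ht2, (min_le_min_left 1 hy').trans (min_one_one_sub_le_one_sub_mul_sq ht2 y)⟩
  have hint : ∀ y < 1, IntervalIntegrable (fun t => w t * (1 - y * t ^ 2) ^ s) volume 0 1 :=
    fun y hy => hw.mul_continuousOn (continuousOn_one_sub_mul_sq_rpow hy s)
  have hint' : IntervalIntegrable (fun t => w t * (-t ^ 2 * s * (1 - m * t ^ 2) ^ (s - 1)))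
      volume 0 1 :=
    hw.mul_continuousOn ((by fun_prop : Continuous fun t : ℝ => -t ^ 2 * s).continuousOn.mul
      (continuousOn_one_sub_mul_sq_rpow hm (s - 1)))
  refine (intervalIntegral.hasDerivAt_integral_of_dominated_loc_of_deriv_le
    (F := fun y t => w t * (1 - y * t ^ 2) ^ s)
    (F' := fun y t => w t * (-t ^ 2 * s * (1 - y * t ^ 2) ^ (s - 1)))
    (bound := fun t => ‖w t‖ * (|s| * c ^ (s - 1)))
    (Metric.ball_mem_nhds m (half_pos (sub_pos.2 hm)))
    ((eventually_lt_nhds hm).mono fun y hy => (hint y hy).def'.aestronglyMeasurable)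
    (hint m hm) hint'.def'.aestronglyMeasurable ?_ (hw.norm.mul_const _) ?_).2
  · refine Eventually.of_forall fun t ht y hy => ?_
    obtain ⟨ht2, hcy⟩ := hbound t ht y hy
    rw [norm_mul, norm_eq_abs (_ * _)]
    gcongr
    exact abs_deriv_one_sub_mul_sq_rpow_le hc hcy ht2 hs
  · refine Eventually.of_forall fun t ht y hy => ?_
    exact (hasDerivAt_one_sub_mul_sq_rpow (hc.trans_le (hbound t ht y hy).2) s).const_mul (w t)

lemma ellipticK_eq_integral_rpow {m : ℝ} (hm : m < 1) :
    ellipticK m = ∫ t in 0..1, √((1 - t ^ 2)⁻¹) * (1 - m * t ^ 2) ^ (-(1 / 2) : ℝ) := by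
  refine intervalIntegral.integral_congr fun t ht => ?_
  rw [uIcc_of_le zero_le_one] at ht
  have ht2 : 0 ≤ 1 - t ^ 2 := sub_nonneg.2 (pow_le_one₀ ht.1 ht.2)
  rw [rpow_neg (one_sub_mul_sq_pos ht hm).le, ← sqrt_eq_rpow, one_div, sqrt_mul ht2,
    mul_inv, sqrt_inv]

theorem differentiableAt_ellipticK {m : ℝ} (hm : m < 1) : DifferentiableAt ℝ ellipticK m := by
  have hw : IntervalIntegrable (fun t : ℝ => √((1 - t ^ 2)⁻¹)) volume 0 1 :=
    Polynomial.Chebyshev.intervalIntegrable_sqrt_one_sub_sq_inv.mono_set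
      (uIcc_subset_uIcc (by norm_num [mem_uIcc]) (by norm_num [mem_uIcc]))
  exact (hasDerivAt_integral_mul_one_sub_mul_sq_rpow hw (by norm_num) hm).differentiableAt
    |>.congr_of_eventuallyEq ((eventually_lt_nhds hm).mono fun y => ellipticK_eq_integral_rpow)

lemma sqrt_sq_mul_pow_two_mul_add_one {a b : ℝ} (ha : 0 ≤ a) (hb : 0 ≤ b) (k : ℕ) :
    √(a ^ 2 * b ^ (2 * k + 1)) = a * b ^ k * √b := by
  rw [show a ^ 2 * b ^ (2 * k + 1) = (a * b ^ k) ^ 2 * b by ring, sqrt_mul' _ hb,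
    sqrt_sq (by positivity)]

theorem deriv_Phi (x : ℝ) (hx : x < 1) :
    deriv Phi x =
      (1 / (4 * Real.sqrt ((1 - x) * (1 + Real.sqrt (1 - x)) ^ 3))) *
        ellipticK ((1 - Real.sqrt (1 - x)) / (1 + Real.sqrt (1 - x))) +
      (1 / Real.sqrt ((1 - x) * (1 + Real.sqrt (1 - x)) ^ 5)) *
        deriv ellipticK ((1 - Real.sqrt (1 - x)) / (1 + Real.sqrt (1 - x))) := by
  have hx' : 0 < 1 - x := sub_pos.2 hx
  have hS : HasDerivAt (fun y => √(1 - y)) (-1 / (2 * √(1 - x))) x :=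
    ((hasDerivAt_id x).const_sub 1).sqrt hx'.ne'
  have hs : 0 < √(1 - x) := sqrt_pos.2 hx'
  have hm : (1 - √(1 - x)) / (1 + √(1 - x)) < 1 := (div_lt_one (by positivity)).2 (by linarith)
  have hPhi := ((differentiableAt_ellipticK hm).hasDerivAt.comp x
      ((hS.const_sub 1).div (hS.const_add 1) (by positivity))).div
      ((hS.const_add 1).sqrt (by positivity)) (sqrt_pos.2 (by positivity)).ne'
  rw [show deriv Phi x = _ from hPhi.deriv]
  simp only [Function.comp_apply, Pi.div_apply]
  set s := √(1 - x)
  have hs2 : 1 - x = s ^ 2 := (sq_sqrt hx'.le).symm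
  rw [hs2, sqrt_sq_mul_pow_two_mul_add_one (k := 1) hs.le (by positivity),
    sqrt_sq_mul_pow_two_mul_add_one (k := 2) hs.le (by positivity)]
  field_simp
  rw [sq_sqrt (by positivity)]
  ring
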